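/- Let n > 1. In the multivariate polynomial ring R = ℚ[a₁, …, a_n, b₁, …, b_n], define for each k with 1 ≤ k ≤ 2n the element r_k = Σ_{i+j=k, 0≤i≤n, 0≤j≤n} a_i b_j, where by convention a₀ = b₀ = 1. Then the element a₂ − b₂ does not belong to the ideal of R generated by r₁, …, r_{2n}. -/

import Mathlib

open MvPolynomial

/-- The variables `a₁, …, a_n` of `R = ℚ[a₁, …, a_n, b₁, …, b_n]`, with the convention
`a₀ = 1` (and `a_i = 0` for `i > n`). -/
noncomputable def aVar (n : ℕ) (i : ℕ) : MvPolynomial (Fin n ⊕ Fin n) ℚ :=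
  if i = 0 then 1 else if h : i - 1 < n then X (Sum.inl ⟨i - 1, h⟩) else 0

/-- The variables `b₁, …, b_n` of `R = ℚ[a₁, …, a_n, b₁, …, b_n]`, with the convention
`b₀ = 1` (and `b_j = 0` for `j > n`). -/
noncomputable def bVar (n : ℕ) (j : ℕ) : MvPolynomial (Fin n ⊕ Fin n) ℚ :=
  if j = 0 then 1 else if h : j - 1 < n then X (Sum.inr ⟨j - 1, h⟩) else 0

/-- `r_k = Σ_{i+j=k, 0 ≤ i ≤ n, 0 ≤ j ≤ n} a_i b_j`. -/
noncomputable def rPoly (n : ℕ) (k : ℕ) : MvPolynomial (Fin n ⊕ Fin n) ℚ :=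
  ∑ p ∈ (Finset.HasAntidiagonal.antidiagonal k).filter (fun p => p.1 ≤ n ∧ p.2 ≤ n),
    aVar n p.1 * bVar n p.2

/-!
Evaluate at the point of the dual numbers `ℚ[ε]` (`ε² = 0`) where `a₂ = ε`, `b₂ = -ε` and all
other variables vanish. A product `aᵢ bⱼ` with `i + j ≥ 1` then survives only as `a₂ b₀ = ε` or
`a₀ b₂ = -ε`, which cancel in `r₂`; so every `r_k` with `k ≥ 1` is killed, while `a₂ - b₂ ↦ 2ε ≠ 0`.
-/

open DualNumber Finset.HasAntidiagonal

theorem Ideal.notMem_span_of_map_eq_zero {R S F : Type*} [CommSemiring R] [Semiring S]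
    [FunLike F R S] [RingHomClass F R S] (f : F) {s : Set R} {x : R}
    (hs : ∀ y ∈ s, f y = 0) (hx : f x ≠ 0) : x ∉ Ideal.span s :=
  fun hmem => hx <| (Ideal.span_le (I := RingHom.ker f)).2 hs hmem

/-- The variable `Sum.inl ⟨1, _⟩` is `a₂`, since `aVar` shifts indices by one. -/
noncomputable def dualEvalPoint (n : ℕ) : Fin n ⊕ Fin n → DualNumber ℚ :=
  Sum.elim (fun i => if (i : ℕ) = 1 then ε else 0) (fun j => if (j : ℕ) = 1 then -ε else 0)

section DualEval

variable {n : ℕ}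

theorem aeval_dualEvalPoint_aVar (hn : 1 < n) (i : ℕ) :
    aeval (dualEvalPoint n) (aVar n i) = if i = 0 then 1 else if i = 2 then ε else 0 := by
  unfold aVar
  split_ifs <;> simp_all [dualEvalPoint]

theorem aeval_dualEvalPoint_bVar (hn : 1 < n) (j : ℕ) :
    aeval (dualEvalPoint n) (bVar n j) = if j = 0 then 1 else if j = 2 then -ε else 0 := by
  unfold bVar
  split_ifs <;> simp_all [dualEvalPoint]

theorem aeval_dualEvalPoint_aVar_mul_bVar (hn : 1 < n) {i j : ℕ} (h0 : i + j ≠ 0)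
    (h2 : i + j ≠ 2) : aeval (dualEvalPoint n) (aVar n i * bVar n j) = 0 := by
  rw [map_mul, aeval_dualEvalPoint_aVar hn, aeval_dualEvalPoint_bVar hn]
  split_ifs <;> first | omega | simp [eps_mul_eps]

theorem aeval_dualEvalPoint_rPoly (hn : 1 < n) {k : ℕ} (hk : 1 ≤ k) :
    aeval (dualEvalPoint n) (rPoly n k) = 0 := by
  rw [rPoly, map_sum]
  by_cases hk2 : k = 2
  · subst hk2
    have hfull : (antidiagonal 2).filter (fun p : ℕ × ℕ => p.1 ≤ n ∧ p.2 ≤ n) = antidiagonal 2 :=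
      Finset.filter_true_of_mem fun p hp => by rw [mem_antidiagonal] at hp; omega
    rw [hfull, Finset.Nat.sum_antidiagonal_eq_sum_range_succ_mk]
    simp [Finset.sum_range_succ, aeval_dualEvalPoint_aVar hn, aeval_dualEvalPoint_bVar hn]
  · refine Finset.sum_eq_zero fun p hp => ?_
    rw [Finset.mem_filter, mem_antidiagonal] at hp
    exact aeval_dualEvalPoint_aVar_mul_bVar hn (by omega) (by omega)

theorem aeval_dualEvalPoint_aVar_two_sub_bVar_two (hn : 1 < n) :
    aeval (dualEvalPoint n) (aVar n 2 - bVar n 2) = ε + ε := by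
  simp [aeval_dualEvalPoint_aVar hn, aeval_dualEvalPoint_bVar hn]

end DualEval

/-- For `n > 1`, in `R = ℚ[a₁, …, a_n, b₁, …, b_n]`, the element `a₂ - b₂`
does not belong to the ideal generated by `r₁, …, r_{2n}`,
where `r_k = Σ_{i+j=k, 0 ≤ i ≤ n, 0 ≤ j ≤ n} a_i b_j` (with `a₀ = b₀ = 1`). -/
theorem a2_sub_b2_not_mem_span_whitney (n : ℕ) (hn : 1 < n) :
    aVar n 2 - bVar n 2 ∉ Ideal.span ((fun k => rPoly n k) '' Set.Icc 1 (2 * n)) := by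
  refine Ideal.notMem_span_of_map_eq_zero (aeval (dualEvalPoint n)) ?_ ?_
  · rintro _ ⟨k, hk, rfl⟩
    exact aeval_dualEvalPoint_rPoly hn hk.1
  · rw [aeval_dualEvalPoint_aVar_two_sub_bVar_two hn]
    intro h
    simpa [TrivSqZeroExt.snd_add, snd_eps] using congrArg TrivSqZeroExt.snd h
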